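/- arXiv:1911.12896 — 3 statements merged into one kernel-verified Lean document; each statement's English description precedes it below -/
import Mathlib

section
/- Let E be a real normed vector space, let Δ > 0, C > 0, T ∈ ℕ, let w : ℕ → E be a sequence of models, and let f : ℕ → ℝ be a sequence of nonnegative losses such that the drift bound ‖w(t+1) − w(t)‖ ≤ C·f(t) holds for every t < T. Suppose t₀ < t₁ < ⋯ < t_m are natural numbers with t_m ≤ T such that ‖w(t_i) − w(t_{i−1})‖ > √Δ for every i ∈ {1,…,m}. Then m ≤ (C/√Δ)·∑_{t = t₀}^{T−1} f(t), i.e., the number of violations of a single learner is bounded by C/√Δ times its cumulative loss. -/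
/-!
Summing the drift bound along the trajectory shows that between two consecutive violation times
the model can move by more than `√Δ` only if the learner accumulates loss more than `√Δ / C` in
between. The stretches between consecutive violations are disjoint, so `m` violations cost more
than `m √Δ / C` of cumulative loss.
-/

open Finset

theorem norm_sub_le_Ico_sum_of_norm_succ_sub_le {E : Type*} [SeminormedAddCommGroup E]
    {w : ℕ → E} {d : ℕ → ℝ} {a b : ℕ} (hab : a ≤ b)
    (hd : ∀ k, a ≤ k → k < b → ‖w (k + 1) - w k‖ ≤ d k) :
    ‖w b - w a‖ ≤ ∑ k ∈ Ico a b, d k := by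
  rw [← dist_eq_norm, dist_comm]
  exact dist_le_Ico_sum_of_dist_le hab fun hak hkb => by
    rw [dist_comm, dist_eq_norm]; exact hd _ hak hkb

theorem nsmul_le_sub_of_le_succ_sub {α : Type*} [AddCommGroup α] [PartialOrder α]
    [IsOrderedAddMonoid α] {m : ℕ} (u : Fin (m + 1) → α) {c : α}
    (h : ∀ i : Fin m, c ≤ u i.succ - u i.castSucc) :
    m • c ≤ u (Fin.last m) - u 0 := by
  induction m with
  | zero => simp
  | succ m ih =>
    have hinit := ih (fun i => u i.castSucc) fun i => h i.castSucc
    have hlast := h (Fin.last m)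
    rw [Fin.succ_last] at hlast
    calc (m + 1) • c = m • c + c := succ_nsmul c m
      _ ≤ (u (Fin.last m).castSucc - u 0) + (u (Fin.last (m + 1)) - u (Fin.last m).castSucc) :=
        add_le_add (by simpa using hinit) hlast
      _ = u (Fin.last (m + 1)) - u 0 := by abel

/-- If each drift of a single learner's model is bounded by `C` times its loss,
then the number of its violation times is bounded by `C/√Δ` times its
cumulative loss: `m ≤ (C/√Δ) · ∑_{s = t 0}^{T-1} f s`. -/
theorem num_violations_le_cumulative_loss
    {E : Type*} [NormedAddCommGroup E] [NormedSpace ℝ E]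
    (Δ C : ℝ) (hΔ : 0 < Δ) (hC : 0 < C) (T m : ℕ)
    (w : ℕ → E) (f : ℕ → ℝ) (hf : ∀ s, 0 ≤ f s)
    (hdrift : ∀ s < T, ‖w (s + 1) - w s‖ ≤ C * f s)
    (t : Fin (m + 1) → ℕ) (ht : StrictMono t) (htT : t (Fin.last m) ≤ T)
    (hviol : ∀ i : Fin m, Real.sqrt Δ < ‖w (t i.succ) - w (t i.castSucc)‖) :
    (m : ℝ) ≤ (C / Real.sqrt Δ) * ∑ s ∈ Finset.Ico (t 0) T, f s := by
  set loss : ℕ → ℝ := fun n => C * ∑ s ∈ range n, f s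
  have hloss : ∀ {a b}, a ≤ b → loss b - loss a = C * ∑ s ∈ Ico a b, f s := fun hab => by
    simp only [loss, ← mul_sub, sum_Ico_eq_sub _ hab]
  have hcount : m • Real.sqrt Δ ≤ loss (t (Fin.last m)) - loss (t 0) :=
    nsmul_le_sub_of_le_succ_sub (loss ∘ t) fun i => by
      have hi : t i.castSucc ≤ t i.succ := (ht i.castSucc_lt_succ).le
      rw [Function.comp_apply, Function.comp_apply, hloss hi, mul_sum]
      refine (hviol i).le.trans (norm_sub_le_Ico_sum_of_norm_succ_sub_le hi fun k _ hk => ?_)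
      exact hdrift k (hk.trans_le ((ht.monotone (Fin.le_last _)).trans htT))
  have htail : loss (t (Fin.last m)) ≤ loss T :=
    mul_le_mul_of_nonneg_left (sum_le_sum_of_subset_of_nonneg (range_subset_range.2 htT)
      fun s _ _ => hf s) hC.le
  rw [nsmul_eq_mul] at hcount
  rw [div_mul_eq_mul_div, ← hloss ((ht.monotone (Fin.zero_le _)).trans htT),
    le_div_iff₀ (Real.sqrt_pos.2 hΔ)]
  linarith
end

section
/- Let E be a real normed vector space, let Δ > 0, C > 0, T ∈ ℕ, let k ≥ 1 be the number of local learners, and for each learner l ∈ {1,…,k} let w_l : ℕ → E be its model sequence and f_l : ℕ → ℝ a nonnegative loss sequence with ‖w_l(t+1) − w_l(t)‖ ≤ C·f_l(t) for all t < T. For each learner l, let t^l_0 < t^l_1 < ⋯ < t^l_{m_l} ≤ T be its violation times, satisfying ‖w_l(t^l_i) − w_l(t^l_{i−1})‖ > √Δ for every i ∈ {1,…,m_l}. Then the number of time points t ∈ {1,…,T} at which at least one learner has a violation is at most (C/√Δ)·∑_{l=1}^k ∑_{t=0}^{T−1} f_l(t), i.e., it is bounded by C/√Δ times the cumulative loss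 of the distributed system. -/
/-!
Between two consecutive violations of a learner its model moves by more than `√Δ`, and by the
triangle inequality that displacement is at most the path length of the model over the interval
between them. These intervals are consecutive, so the path lengths add up and a learner with
`m` violations has path length at least `m √Δ` before time `T`, while the drift bound makes the
path length at most `C` times its cumulative loss. Summing over learners and counting each global
violation time at least once among the local ones gives the claim.
-/

open Finset

section Variation

variable {E : Type*} [SeminormedAddCommGroup E]

def variation (w : ℕ → E) (a b : ℕ) : ℝ :=
  ∑ s ∈ Ico a b, ‖w (s + 1) - w s‖

variable (w : ℕ → E)

theorem norm_sub_le_variation {a b : ℕ} (hab : a ≤ b) : ‖w b - w a‖ ≤ variation w a b := by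
  rw [← dist_eq_norm, dist_comm, variation]
  convert dist_le_Ico_sum_dist w hab using 2 with s
  rw [dist_comm, dist_eq_norm]

theorem variation_add_variation {a b c : ℕ} (hab : a ≤ b) (hbc : b ≤ c) :
    variation w a b + variation w b c = variation w a c :=
  sum_Ico_consecutive _ hab hbc

theorem variation_mono {a a' b b' : ℕ} (ha : a' ≤ a) (hb : b ≤ b') :
    variation w a b ≤ variation w a' b' :=
  sum_le_sum_of_subset_of_nonneg (Ico_subset_Ico ha hb) fun _ _ _ => norm_nonneg _

theorem variation_le_mul_sum {C : ℝ} {f : ℕ → ℝ} {a b : ℕ}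
    (hdrift : ∀ s, s < b → ‖w (s + 1) - w s‖ ≤ C * f s) :
    variation w a b ≤ C * ∑ s ∈ Ico a b, f s := by
  rw [mul_sum]
  exact sum_le_sum fun s hs => hdrift s (mem_Ico.1 hs).2

theorem sum_variation_eq_of_monotone {n : ℕ} {t : Fin (n + 1) → ℕ} (ht : Monotone t) :
    ∑ i : Fin n, variation w (t i.castSucc) (t i.succ) = variation w (t 0) (t (Fin.last n)) := by
  induction n with
  | zero => simp [variation]
  | succ n ih =>
    have ih' := ih (t := fun i => t i.castSucc) (ht.comp Fin.strictMono_castSucc.monotone)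
    simp only [Fin.castSucc_zero, Fin.castSucc_succ] at ih'
    rw [Fin.sum_univ_castSucc, ih', Fin.succ_last]
    exact variation_add_variation w (ht (Fin.zero_le _)) (ht (Fin.castSucc_le_succ _))

theorem mul_le_variation_of_le_norm_sub {n : ℕ} {t : Fin (n + 1) → ℕ} (ht : Monotone t) {δ : ℝ}
    (hjump : ∀ i : Fin n, δ ≤ ‖w (t i.succ) - w (t i.castSucc)‖) :
    n * δ ≤ variation w (t 0) (t (Fin.last n)) := by
  rw [← sum_variation_eq_of_monotone w ht]
  calc (n : ℝ) * δ = ∑ _i : Fin n, δ := by simp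
    _ ≤ ∑ i : Fin n, variation w (t i.castSucc) (t i.succ) := sum_le_sum fun i _ =>
      (hjump i).trans (norm_sub_le_variation w (ht (Fin.castSucc_le_succ i)))

end Variation

theorem Finset.card_filter_exists_le_sum {ι α : Type*} [Fintype ι] {m : ι → ℕ}
    (g : (l : ι) → Fin (m l) → α) (S : Finset α) [DecidablePred fun a => ∃ l, ∃ i, g l i = a] :
    #(S.filter fun a => ∃ l, ∃ i, g l i = a) ≤ ∑ l, m l := by
  classical
  calc #(S.filter fun a => ∃ l, ∃ i, g l i = a)
      ≤ #((univ : Finset (Σ l, Fin (m l))).image fun p => g p.1 p.2) := by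
        refine card_le_card fun a ha => ?_
        obtain ⟨-, l, i, rfl⟩ := mem_filter.1 ha
        exact mem_image_of_mem _ (mem_univ (⟨l, i⟩ : Σ l, Fin (m l)))
    _ ≤ #(univ : Finset (Σ l, Fin (m l))) := card_image_le
    _ = ∑ l, m l := by simp

theorem num_global_violations_le_cumulative_loss_general
    {E : Type*} [NormedAddCommGroup E]
    (Δ C : ℝ) (hΔ : 0 < Δ) (T k : ℕ)
    (w : Fin k → ℕ → E) (f : Fin k → ℕ → ℝ)
    (hdrift : ∀ l, ∀ s < T, ‖w l (s + 1) - w l s‖ ≤ C * f l s)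
    (m : Fin k → ℕ) (t : (l : Fin k) → Fin (m l + 1) → ℕ)
    (ht : ∀ l, StrictMono (t l)) (htT : ∀ l, t l (Fin.last (m l)) ≤ T)
    (hviol : ∀ l, ∀ i : Fin (m l),
      Real.sqrt Δ < ‖w l (t l i.succ) - w l (t l i.castSucc)‖) :
    (((Finset.Icc 1 T).filter
        (fun s => ∃ l, ∃ i : Fin (m l), t l i.succ = s)).card : ℝ)
      ≤ (C / Real.sqrt Δ) * ∑ l, ∑ s ∈ Finset.range T, f l s := by
  have hsqrt : 0 < Real.sqrt Δ := Real.sqrt_pos.2 hΔ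
  have hlocal : ∀ l, (m l : ℝ) * Real.sqrt Δ ≤ C * ∑ s ∈ range T, f l s := fun l =>
    calc (m l : ℝ) * Real.sqrt Δ
        ≤ variation (w l) (t l 0) (t l (Fin.last (m l))) :=
          mul_le_variation_of_le_norm_sub (w l) (ht l).monotone fun i => (hviol l i).le
      _ ≤ variation (w l) 0 T := variation_mono (w l) (Nat.zero_le _) (htT l)
      _ ≤ C * ∑ s ∈ range T, f l s := by
          rw [range_eq_Ico]; exact variation_le_mul_sum (w l) (hdrift l)
  calc (((Icc 1 T).filter fun s => ∃ l, ∃ i : Fin (m l), t l i.succ = s).card : ℝ)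
      ≤ ∑ l, (m l : ℝ) := by
        exact_mod_cast card_filter_exists_le_sum (fun l (i : Fin (m l)) => t l i.succ) _
    _ ≤ ∑ l, (C / Real.sqrt Δ) * ∑ s ∈ range T, f l s := sum_le_sum fun l _ => by
        rw [div_mul_eq_mul_div, le_div_iff₀ hsqrt]; exact hlocal l
    _ = (C / Real.sqrt Δ) * ∑ l, ∑ s ∈ range T, f l s := (mul_sum ..).symm

/-- The number of time points in `{1,…,T}` at which at least one of the `k`
learners has a violation is bounded by `C/√Δ` times the cumulative loss of the
distributed system, `∑_{l=1}^k ∑_{s=0}^{T-1} f l s`. -/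
theorem num_global_violations_le_cumulative_loss
    {E : Type*} [NormedAddCommGroup E] [NormedSpace ℝ E]
    (Δ C : ℝ) (hΔ : 0 < Δ) (hC : 0 < C) (T k : ℕ) (hk : 1 ≤ k)
    (w : Fin k → ℕ → E) (f : Fin k → ℕ → ℝ)
    (hf : ∀ l s, 0 ≤ f l s)
    (hdrift : ∀ l, ∀ s < T, ‖w l (s + 1) - w l s‖ ≤ C * f l s)
    (m : Fin k → ℕ) (t : (l : Fin k) → Fin (m l + 1) → ℕ)
    (ht : ∀ l, StrictMono (t l)) (htT : ∀ l, t l (Fin.last (m l)) ≤ T)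
    (hviol : ∀ l, ∀ i : Fin (m l),
      Real.sqrt Δ < ‖w l (t l i.succ) - w l (t l i.castSucc)‖) :
    (((Finset.Icc 1 T).filter
        (fun s => ∃ l, ∃ i : Fin (m l), t l i.succ = s)).card : ℝ)
      ≤ (C / Real.sqrt Δ) * ∑ l, ∑ s ∈ Finset.range T, f l s :=
  num_global_violations_le_cumulative_loss_general Δ C hΔ T k w f hdrift m t ht htT hviol
end

section
/- Let E be a real normed vector space, let Δ > 0, C > 0, c ≥ 0, T ∈ ℕ, let k ≥ 1 be the number of local learners, and for each learner l ∈ {1,…,k} let w_l : ℕ → E be its model sequence and f_l : ℕ → ℝ a nonnegative loss sequence with ‖w_l(t+1) − w_l(t)‖ ≤ C·f_l(t) for all t < T. For each learner l let t^l_0 < t^l_1 < ⋯ < t^l_{m_l} ≤ T be its violation times, satisfying ‖w_l(t^l_i) − w_l(t^l_{i−1})‖ > √Δ for every i ∈ {1,…,m_l}. Let comm : ℕ → ℝ be the per-round communication cost, satisfying 0 ≤ comm(t) ≤ c for every t, and comm(t) = 0 whenever t is not a violation time of any learner. Then the total communication satisfies ∑_{t=1}^T comm(t) ≤ c·(C/√Δ)·∑_{l=1}^k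 ∑_{t=0}^{T−1} f_l(t). -/
/-!
Between consecutive violation times a learner's model moves by more than `√Δ`, while by the
triangle inequality it moves by at most `C` times the loss accumulated in between. Hence learner
`l` has at most `C / √Δ` times its cumulative loss many violations. Communication happens only at
violation times and costs at most `c` there.
-/

open Finset

theorem Fin.sum_sum_Ico_castSucc_succ {M : Type*} [AddCommMonoid M] (g : ℕ → M) :
    ∀ {m : ℕ} {u : Fin (m + 1) → ℕ}, Monotone u →
      ∑ i : Fin m, ∑ s ∈ Ico (u i.castSucc) (u i.succ), g s
        = ∑ s ∈ Ico (u 0) (u (Fin.last m)), g s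
  | 0, u, _ => by simp
  | m + 1, u, hu => by
    have ih := Fin.sum_sum_Ico_castSucc_succ g (hu.comp Fin.strictMono_castSucc.monotone)
    simp only [Function.comp_apply, ← Fin.succ_castSucc] at ih
    rw [Fin.sum_univ_castSucc, ih]
    exact sum_Ico_consecutive g (hu (Fin.zero_le _)) (hu (Fin.castSucc_le_succ _))

theorem Fin.sum_dist_le_sum_Ico_dist {α : Type*} [PseudoMetricSpace α] (w : ℕ → α) {m : ℕ}
    {u : Fin (m + 1) → ℕ} (hu : Monotone u) :
    ∑ i : Fin m, dist (w (u i.castSucc)) (w (u i.succ))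
      ≤ ∑ s ∈ Ico (u 0) (u (Fin.last m)), dist (w s) (w (s + 1)) := by
  rw [← Fin.sum_sum_Ico_castSucc_succ _ hu]
  exact sum_le_sum fun i _ => dist_le_Ico_sum_dist w (hu (Fin.castSucc_le_succ i))

theorem natCast_le_div_mul_sum_of_le_norm_sub {E : Type*} [SeminormedAddCommGroup E]
    {r C : ℝ} (hr : 0 < r) (hC : 0 ≤ C) {T m : ℕ} {w : ℕ → E} {f : ℕ → ℝ} (hf : ∀ s, 0 ≤ f s)
    (hdrift : ∀ s < T, ‖w (s + 1) - w s‖ ≤ C * f s) {u : Fin (m + 1) → ℕ} (hu : Monotone u)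
    (huT : u (Fin.last m) ≤ T) (hviol : ∀ i : Fin m, r ≤ ‖w (u i.succ) - w (u i.castSucc)‖) :
    (m : ℝ) ≤ C / r * ∑ s ∈ range T, f s := by
  rw [div_mul_eq_mul_div, le_div_iff₀ hr]
  calc (m : ℝ) * r = ∑ _i : Fin m, r := by simp
    _ ≤ ∑ i : Fin m, dist (w (u i.castSucc)) (w (u i.succ)) := by
      gcongr with i
      rw [dist_comm, dist_eq_norm]
      exact hviol i
    _ ≤ ∑ s ∈ Ico (u 0) (u (Fin.last m)), dist (w s) (w (s + 1)) :=
      Fin.sum_dist_le_sum_Ico_dist w hu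
    _ ≤ ∑ s ∈ Ico (u 0) (u (Fin.last m)), C * f s := by
      gcongr with s hs
      rw [dist_comm, dist_eq_norm]
      exact hdrift s ((mem_Ico.1 hs).2.trans_le huT)
    _ ≤ ∑ s ∈ range T, C * f s := by
      refine sum_le_sum_of_subset_of_nonneg ?_ fun s _ _ => mul_nonneg hC (hf s)
      exact fun s hs => mem_range.2 ((mem_Ico.1 hs).2.trans_le huT)
    _ = C * ∑ s ∈ range T, f s := (mul_sum ..).symm

theorem sum_le_card_mul_of_eq_zero_of_notMem {α : Type*} {S V : Finset α} {g : α → ℝ} {c : ℝ}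
    (hc : 0 ≤ c) (hg : ∀ s, g s ≤ c) (hV : ∀ s ∉ V, g s = 0) : ∑ s ∈ S, g s ≤ #V * c := by
  classical
  calc ∑ s ∈ S, g s = ∑ s ∈ S ∩ V, g s :=
        (sum_subset inter_subset_left fun s hsS hs => hV s fun hsV =>
          hs (mem_inter.2 ⟨hsS, hsV⟩)).symm
    _ ≤ #(S ∩ V) * c := by simpa using sum_le_card_nsmul _ g c fun s _ => hg s
    _ ≤ #V * c := by gcongr; exact inter_subset_right

theorem communication_le_cumulative_loss_general
    {E : Type*} [NormedAddCommGroup E]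
    (Δ C c : ℝ) (hΔ : 0 < Δ) (hC : 0 < C) (hc : 0 ≤ c) (T k : ℕ)
    (w : Fin k → ℕ → E) (f : Fin k → ℕ → ℝ)
    (hf : ∀ l s, 0 ≤ f l s)
    (hdrift : ∀ l, ∀ s < T, ‖w l (s + 1) - w l s‖ ≤ C * f l s)
    (m : Fin k → ℕ) (t : (l : Fin k) → Fin (m l + 1) → ℕ)
    (ht : ∀ l, StrictMono (t l)) (htT : ∀ l, t l (Fin.last (m l)) ≤ T)
    (hviol : ∀ l, ∀ i : Fin (m l),
      Real.sqrt Δ < ‖w l (t l i.succ) - w l (t l i.castSucc)‖)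
    (comm : ℕ → ℝ)
    (hcomm_le : ∀ s, comm s ≤ c)
    (hcomm_zero : ∀ s, (¬ ∃ l, ∃ i : Fin (m l), t l i.succ = s) → comm s = 0) :
    ∑ s ∈ Finset.Icc 1 T, comm s
      ≤ c * (C / Real.sqrt Δ) * ∑ l, ∑ s ∈ Finset.range T, f l s := by
  classical
  let V : Finset ℕ := univ.image fun p : (l : Fin k) × Fin (m l) => t p.1 p.2.succ
  have hV : ∀ s ∉ V, comm s = 0 := fun s hs =>
    hcomm_zero s fun ⟨l, i, hi⟩ => hs (mem_image.2 ⟨⟨l, i⟩, mem_univ _, hi⟩)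
  have hcard : #V ≤ ∑ l, m l := by
    simpa using card_image_le (s := (univ : Finset ((l : Fin k) × Fin (m l))))
  calc ∑ s ∈ Icc 1 T, comm s ≤ #V * c := sum_le_card_mul_of_eq_zero_of_notMem hc hcomm_le hV
    _ ≤ (∑ l, (m l : ℝ)) * c := by gcongr; exact_mod_cast hcard
    _ ≤ (∑ l, C / Real.sqrt Δ * ∑ s ∈ range T, f l s) * c := by
      gcongr with l
      exact natCast_le_div_mul_sum_of_le_norm_sub (Real.sqrt_pos.2 hΔ) hC.le (hf l) (hdrift l)
        (ht l).monotone (htT l) fun i => (hviol l i).le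
    _ = c * (C / Real.sqrt Δ) * ∑ l, ∑ s ∈ range T, f l s := by rw [← mul_sum]; ring

/-- The cumulative communication of dynamic averaging is bounded by `c · C/√Δ`
times the cumulative loss of the distributed system: communication occurs only
at time points where some learner has a violation, costs at most `c` per time
point, and the number of such time points is bounded via the loss. -/
theorem communication_le_cumulative_loss
    {E : Type*} [NormedAddCommGroup E] [NormedSpace ℝ E]
    (Δ C c : ℝ) (hΔ : 0 < Δ) (hC : 0 < C) (hc : 0 ≤ c) (T k : ℕ) (hk : 1 ≤ k)
    (w : Fin k → ℕ → E) (f : Fin k → ℕ → ℝ)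
    (hf : ∀ l s, 0 ≤ f l s)
    (hdrift : ∀ l, ∀ s < T, ‖w l (s + 1) - w l s‖ ≤ C * f l s)
    (m : Fin k → ℕ) (t : (l : Fin k) → Fin (m l + 1) → ℕ)
    (ht : ∀ l, StrictMono (t l)) (htT : ∀ l, t l (Fin.last (m l)) ≤ T)
    (hviol : ∀ l, ∀ i : Fin (m l),
      Real.sqrt Δ < ‖w l (t l i.succ) - w l (t l i.castSucc)‖)
    (comm : ℕ → ℝ)
    (hcomm_nonneg : ∀ s, 0 ≤ comm s) (hcomm_le : ∀ s, comm s ≤ c)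
    (hcomm_zero : ∀ s, (¬ ∃ l, ∃ i : Fin (m l), t l i.succ = s) → comm s = 0) :
    ∑ s ∈ Finset.Icc 1 T, comm s
      ≤ c * (C / Real.sqrt Δ) * ∑ l, ∑ s ∈ Finset.range T, f l s :=
  communication_le_cumulative_loss_general Δ C c hΔ hC hc T k w f hf hdrift m t ht htT hviol comm
    hcomm_le hcomm_zero
end
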